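/- In the 3-veto conformant bribery construction from 3DM: given pairwise disjoint sets X, Y, Z of size k and M ⊆ X × Y × Z in which every element appears in exactly three triples, form the election with candidates {p, p₁, p₂} ∪ X ∪ Y ∪ Z, one voter vetoing {x, y, z} (i.e., ranking x, y, z in the last three positions) for each (x,y,z) ∈ M, and k + 4 voters vetoing {p, p₁, p₂}. Then p can be made a 3-veto winner by changing the votes of at most k voters to votes already occurring in the election if and only if M contains a perfect matching of size k. -/

import Mathlib

/-- The ground set of a 3DM instance with `|X| = |Y| = |Z| = k`, the three
summands representing `X`, `Y`, `Z` (pairwise disjoint by construction). -/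
abbrev Elem (k : ℕ) := Fin k ⊕ Fin k ⊕ Fin k

/-- Candidates for the 3-veto conformant bribery construction: `none` is the
preferred candidate `p`, `some (inl a)` is the candidate for ground element
`a`, and `some (inr 0)`, `some (inr 1)` are the dummies `p₁`, `p₂`. -/
abbrev Cand7 (k : ℕ) := Option (Elem k ⊕ Fin 2)

/-- A 3-veto vote is modeled by the set of (three) candidates it vetoes,
i.e., ranks in the last three positions. -/
def tripleVeto {k : ℕ} (t : Fin k × Fin k × Fin k) : Finset (Cand7 k) :=
  {some (Sum.inl (Sum.inl t.1)), some (Sum.inl (Sum.inr (Sum.inl t.2.1))),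
    some (Sum.inl (Sum.inr (Sum.inr t.2.2)))}

/-- The votes of the election: one voter vetoing `{x, y, z}` for each
`(x, y, z) ∈ M`, and `k + 4` voters vetoing `{p, p₁, p₂}`. -/
def votes7 {k : ℕ} (M : Finset (Fin k × Fin k × Fin k)) :
    Multiset (Finset (Cand7 k)) :=
  M.val.map tripleVeto +
    Multiset.replicate (k + 4)
      ({none, some (Sum.inr 0), some (Sum.inr 1)} : Finset (Cand7 k))

/-- The number of vetoes a candidate receives (its 3-veto score is the
negation of this, so winners minimize vetoes). -/
def vetoCount {k : ℕ} (V : Multiset (Finset (Cand7 k))) (c : Cand7 k) : ℕ :=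
  @Multiset.countP _ (fun s => c ∈ s) (fun s => Finset.decidableMem c s) V

/-- `M` contains a perfect matching of size `k`. -/
def matching3 {k : ℕ} (M : Finset (Fin k × Fin k × Fin k)) : Prop :=
  ∃ M' ⊆ M, M'.card = k ∧
    (∀ i : Fin k, (M'.filter (fun t => t.1 = i)).card = 1) ∧
    (∀ i : Fin k, (M'.filter (fun t => t.2.1 = i)).card = 1) ∧
    (∀ i : Fin k, (M'.filter (fun t => t.2.2 = i)).card = 1)

/-!
Every vote vetoes three of the `3k + 3` candidates and, since `|M| = 3k`, there are `4k + 4`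
votes, so the average number of vetoes per candidate is exactly `4`. The candidate `p` starts
with `k + 4` vetoes and bribing at most `k` voters removes at most `k` of them, so `p` can only
win if every candidate ends up with exactly `4` vetoes. For `p` this forces all `k` bribed voters
to be `{p, p₁, p₂}`-voters who switch to triple votes; each ground element, which had `3`
vetoes, then receives exactly one of the new ones, so the new triples form a perfect matching.
Conversely, switching `k` of the `{p, p₁, p₂}`-voters to the triples of a perfect matching
leaves every candidate with `4` vetoes.
-/

open Multiset

lemma Multiset.countP_sub_add_add_countP {α : Type*} [DecidableEq α] (p : α → Prop)
    [DecidablePred p] {s r : Multiset α} (a : Multiset α) (h : r ≤ s) :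
    countP p (s - r + a) + countP p r = countP p s + countP p a := by
  rw [countP_add, countP_sub h]
  have := countP_le_of_le p h
  omega

lemma Finset.countP_val_eq_card_filter {α : Type*} (p : α → Prop) [DecidablePred p]
    (s : Finset α) : s.val.countP p = (s.filter p).card :=
  countP_eq_card_filter _ _

lemma Multiset.sum_countP_mem_of_forall_card_eq {α : Type*} [Fintype α] [DecidableEq α]
    {s : Multiset (Finset α)} {n : ℕ} (h : ∀ v ∈ s, v.card = n) :
    ∑ a, s.countP (a ∈ ·) = n * card s := by
  induction s using Multiset.induction_on with
  | empty => simp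
  | cons v s ih =>
    simp only [countP_cons, Finset.sum_add_distrib, card_cons]
    rw [ih fun w hw => h w (mem_cons_of_mem hw)]
    simp [h v (mem_cons_self v s), mul_add, add_comm]

lemma Multiset.exists_map_eq_of_forall_mem_image {α β : Type*} {f : β → α} {S : Set β}
    {s : Multiset α} (h : ∀ a ∈ s, ∃ b ∈ S, f b = a) :
    ∃ t : Multiset β, (∀ b ∈ t, b ∈ S) ∧ t.map f = s := by
  induction s using Multiset.induction_on with
  | empty => exact ⟨0, by simp, rfl⟩
  | cons a s ih =>
    obtain ⟨b, hbS, rfl⟩ := h a (mem_cons_self a s)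
    obtain ⟨t, htS, rfl⟩ := ih fun a ha => h a (mem_cons_of_mem ha)
    exact ⟨b ::ₘ t, by simpa using ⟨hbS, htS⟩, by simp⟩

section Construction

variable {k : ℕ}

def pVote (k : ℕ) : Finset (Cand7 k) := {none, some (Sum.inr 0), some (Sum.inr 1)}

def elemCand (e : Elem k) : Cand7 k := some (Sum.inl e)

lemma votes7_eq (M : Finset (Fin k × Fin k × Fin k)) :
    votes7 M = M.val.map tripleVeto + replicate (k + 4) (pVote k) := rfl

lemma none_mem_pVote : (none : Cand7 k) ∈ pVote k := by simp [pVote]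

lemma elemCand_notMem_pVote (e : Elem k) : elemCand e ∉ pVote k := by simp [pVote, elemCand]

lemma notMem_tripleVeto_of_mem_pVote {c : Cand7 k} (hc : c ∈ pVote k)
    (t : Fin k × Fin k × Fin k) : c ∉ tripleVeto t := by
  simp only [pVote, Finset.mem_insert, Finset.mem_singleton] at hc
  rcases hc with rfl | rfl | rfl <;> simp [tripleVeto]

lemma mem_pVote_or_eq_elemCand (c : Cand7 k) : c ∈ pVote k ∨ ∃ e, c = elemCand e := by
  rcases c with _ | e | j
  · exact Or.inl none_mem_pVote
  · exact Or.inr ⟨e, rfl⟩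
  · left; fin_cases j <;> simp [pVote]

@[simp]
lemma elemCand_inl_mem_tripleVeto (i : Fin k) (t : Fin k × Fin k × Fin k) :
    elemCand (Sum.inl i) ∈ tripleVeto t ↔ t.1 = i := by
  simp [tripleVeto, elemCand, eq_comm]

@[simp]
lemma elemCand_inr_inl_mem_tripleVeto (i : Fin k) (t : Fin k × Fin k × Fin k) :
    elemCand (Sum.inr (Sum.inl i)) ∈ tripleVeto t ↔ t.2.1 = i := by
  simp [tripleVeto, elemCand, eq_comm]

@[simp]
lemma elemCand_inr_inr_mem_tripleVeto (i : Fin k) (t : Fin k × Fin k × Fin k) :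
    elemCand (Sum.inr (Sum.inr i)) ∈ tripleVeto t ↔ t.2.2 = i := by
  simp [tripleVeto, elemCand, eq_comm]

lemma card_eq_three_of_mem_votes7 {M : Finset (Fin k × Fin k × Fin k)} {v : Finset (Cand7 k)}
    (hv : v ∈ votes7 M) : v.card = 3 := by
  rcases mem_add.1 hv with hv | hv
  · obtain ⟨t, -, rfl⟩ := mem_map.1 hv
    simp [tripleVeto]
  · rw [eq_of_mem_replicate hv]
    simp

lemma eq_pVote_of_mem_votes7 {M : Finset (Fin k × Fin k × Fin k)} {v : Finset (Cand7 k)}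
    (hv : v ∈ votes7 M) (hp : none ∈ v) : v = pVote k := by
  rcases mem_add.1 hv with hv | hv
  · obtain ⟨t, -, rfl⟩ := mem_map.1 hv
    exact absurd hp (notMem_tripleVeto_of_mem_pVote none_mem_pVote t)
  · exact eq_of_mem_replicate hv

lemma exists_tripleVeto_eq_of_mem_votes7 {M : Finset (Fin k × Fin k × Fin k)}
    {v : Finset (Cand7 k)} (hv : v ∈ votes7 M) (hp : none ∉ v) :
    ∃ t ∈ M, tripleVeto t = v := by
  rcases mem_add.1 hv with hv | hv
  · exact mem_map.1 hv
  · exact absurd (eq_of_mem_replicate hv ▸ none_mem_pVote) hp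

lemma vetoCount_sub_add {V R : Multiset (Finset (Cand7 k))} (A : Multiset (Finset (Cand7 k)))
    (h : R ≤ V) (c : Cand7 k) :
    vetoCount (V - R + A) c + vetoCount R c = vetoCount V c + vetoCount A c :=
  countP_sub_add_add_countP _ A h

lemma vetoCount_map_tripleVeto (T : Multiset (Fin k × Fin k × Fin k)) (c : Cand7 k) :
    vetoCount (T.map tripleVeto) c = T.countP (c ∈ tripleVeto ·) := by
  rw [vetoCount, countP_map, countP_eq_card_filter]

lemma vetoCount_replicate_pVote (n : ℕ) (c : Cand7 k) :
    vetoCount (replicate n (pVote k)) c = if c ∈ pVote k then n else 0 := by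
  split_ifs with hc
  · exact (countP_eq_card.2 fun v hv => eq_of_mem_replicate hv ▸ hc).trans (card_replicate n _)
  · exact countP_eq_zero.2 fun v hv => eq_of_mem_replicate hv ▸ hc

lemma vetoCount_votes7 (M : Finset (Fin k × Fin k × Fin k)) (c : Cand7 k) :
    vetoCount (votes7 M) c =
      M.val.countP (c ∈ tripleVeto ·) + if c ∈ pVote k then k + 4 else 0 := by
  rw [votes7_eq, ← vetoCount_map_tripleVeto, ← vetoCount_replicate_pVote]
  exact countP_add _ _ _

lemma vetoCount_votes7_of_mem_pVote (M : Finset (Fin k × Fin k × Fin k)) {c : Cand7 k}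
    (hc : c ∈ pVote k) : vetoCount (votes7 M) c = k + 4 := by
  rw [vetoCount_votes7, if_pos hc,
    countP_eq_zero.2 fun t _ => notMem_tripleVeto_of_mem_pVote hc t, zero_add]

lemma vetoCount_votes7_elemCand (M : Finset (Fin k × Fin k × Fin k)) (e : Elem k) :
    vetoCount (votes7 M) (elemCand e) = (M.filter (elemCand e ∈ tripleVeto ·)).card := by
  rw [vetoCount_votes7, if_neg (elemCand_notMem_pVote e), add_zero,
    Finset.countP_val_eq_card_filter]

lemma forall_card_filter_elemCand_mem_iff (N : Finset (Fin k × Fin k × Fin k)) (n : ℕ) :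
    (∀ e, (N.filter (elemCand e ∈ tripleVeto ·)).card = n) ↔
      (∀ i, (N.filter (fun t => t.1 = i)).card = n) ∧
      (∀ i, (N.filter (fun t => t.2.1 = i)).card = n) ∧
      (∀ i, (N.filter (fun t => t.2.2 = i)).card = n) := by
  simp only [Sum.forall, elemCand_inl_mem_tripleVeto, elemCand_inr_inl_mem_tripleVeto,
    elemCand_inr_inr_mem_tripleVeto]

lemma card_eq_of_forall_card_filter_elemCand_mem {N : Finset (Fin k × Fin k × Fin k)} {n : ℕ}
    (h : ∀ e, (N.filter (elemCand e ∈ tripleVeto ·)).card = n) : N.card = k * n := by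
  rw [Finset.card_eq_sum_card_fiberwise (f := Prod.fst) (t := Finset.univ) fun _ _ => by simp]
  simp [((forall_card_filter_elemCand_mem_iff N n).1 h).1]

lemma matching3_iff (M : Finset (Fin k × Fin k × Fin k)) :
    matching3 M ↔ ∃ M' ⊆ M, ∀ e, (M'.filter (elemCand e ∈ tripleVeto ·)).card = 1 := by
  refine ⟨fun ⟨M', hM', _, h⟩ =>
      ⟨M', hM', (forall_card_filter_elemCand_mem_iff M' 1).2 h⟩,
    fun ⟨M', hM', h⟩ => ⟨M', hM', ?_, (forall_card_filter_elemCand_mem_iff M' 1).1 h⟩⟩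
  rw [card_eq_of_forall_card_filter_elemCand_mem h, mul_one]

lemma nodup_of_vetoCount_elemCand_eq_one {T : Multiset (Fin k × Fin k × Fin k)}
    (h : ∀ e, vetoCount (T.map tripleVeto) (elemCand e) = 1) : T.Nodup := by
  refine Nodup.of_map Prod.fst (nodup_iff_count_le_one.2 fun i => ?_)
  have hi := h (Sum.inl i)
  rw [vetoCount_map_tripleVeto] at hi
  rw [count_map, ← countP_eq_card_filter]
  simp only [elemCand_inl_mem_tripleVeto] at hi
  simp only [eq_comm (a := i), hi, le_refl]

end Construction

section Bribery

variable {k : ℕ} {M : Finset (Fin k × Fin k × Fin k)} {R A : Multiset (Finset (Cand7 k))}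

lemma vetoCount_bribed_none (A : Multiset (Finset (Cand7 k))) (hR : R ≤ votes7 M) :
    vetoCount (votes7 M - R + A) none + vetoCount R none = k + 4 + vetoCount A none := by
  rw [vetoCount_sub_add A hR, vetoCount_votes7_of_mem_pVote M none_mem_pVote]

lemma vetoCount_bribed_eq_four
    (hM : ∀ e, (M.filter (elemCand e ∈ tripleVeto ·)).card = 3) (hR : R ≤ votes7 M)
    (hRk : card R ≤ k) (hAR : card A = card R) (hA : ∀ v ∈ A, v ∈ votes7 M)
    (hwin : ∀ c, vetoCount (votes7 M - R + A) none ≤ vetoCount (votes7 M - R + A) c)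
    (c : Cand7 k) : vetoCount (votes7 M - R + A) c = 4 := by
  have hcard : ∀ v ∈ votes7 M - R + A, v.card = 3 := fun v hv =>
    (mem_add.1 hv).elim
      (fun hv => card_eq_three_of_mem_votes7 (mem_of_le (Multiset.sub_le_self _ _) hv))
      fun hv => card_eq_three_of_mem_votes7 (hA v hv)
  have hsum : ∑ c, vetoCount (votes7 M - R + A) c = ∑ _c : Cand7 k, 4 := by
    calc ∑ c, vetoCount (votes7 M - R + A) c = 3 * card (votes7 M - R + A) :=
          sum_countP_mem_of_forall_card_eq hcard
      _ = 3 * card (votes7 M) := by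
        rw [card_add, card_sub hR, hAR, Nat.sub_add_cancel (card_le_card hR)]
      _ = ∑ _c : Cand7 k, 4 := by
        rw [votes7_eq, card_add, card_map, Finset.card_val,
          card_eq_of_forall_card_filter_elemCand_mem hM, card_replicate, Finset.sum_const,
          Finset.card_univ, smul_eq_mul]
        simp only [Fintype.card_option, Fintype.card_sum, Fintype.card_fin]
        ring
  have hp : 4 ≤ vetoCount (votes7 M - R + A) none := by
    have := vetoCount_bribed_none A hR
    have : vetoCount R none ≤ card R := countP_le_card _ _
    omega
  exact ((Finset.sum_eq_sum_iff_of_le fun c _ => hp.trans (hwin c)).1 hsum.symm c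
    (Finset.mem_univ c)).symm

lemma matching3_of_bribery
    (hM : ∀ e, (M.filter (elemCand e ∈ tripleVeto ·)).card = 3) (hR : R ≤ votes7 M)
    (hRk : card R ≤ k) (hAR : card A = card R) (hA : ∀ v ∈ A, v ∈ votes7 M)
    (hwin : ∀ c, vetoCount (votes7 M - R + A) none ≤ vetoCount (votes7 M - R + A) c) :
    matching3 M := by
  have hfour := vetoCount_bribed_eq_four hM hR hRk hAR hA hwin
  have hnone : vetoCount R none = card R ∧ vetoCount A none = 0 := by
    have := vetoCount_bribed_none A hR
    rw [hfour] at this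
    have : vetoCount R none ≤ card R := countP_le_card _ _
    omega
  have hRp : ∀ v ∈ R, v = pVote k := fun v hv =>
    eq_pVote_of_mem_votes7 (mem_of_le hR hv) (countP_eq_card.1 hnone.1 v hv)
  have hAt : ∀ v ∈ A, ∃ t ∈ M, tripleVeto t = v := fun v hv =>
    exists_tripleVeto_eq_of_mem_votes7 (hA v hv) (countP_eq_zero.1 hnone.2 v hv)
  have hAe : ∀ e, vetoCount A (elemCand e) = 1 := by
    intro e
    have := vetoCount_sub_add A hR (elemCand e)
    have hRe : vetoCount R (elemCand e) = 0 :=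
      countP_eq_zero.2 fun v hv => hRp v hv ▸ elemCand_notMem_pVote e
    rw [hfour, vetoCount_votes7_elemCand, hM e, hRe] at this
    omega
  obtain ⟨T, hTM, rfl⟩ := exists_map_eq_of_forall_mem_image hAt
  refine (matching3_iff M).2 ⟨⟨T, nodup_of_vetoCount_elemCand_eq_one hAe⟩, hTM, fun e => ?_⟩
  rw [← hAe e, vetoCount_map_tripleVeto, ← Finset.countP_val_eq_card_filter]

lemma bribery_of_matching3 (hM : ∀ e, (M.filter (elemCand e ∈ tripleVeto ·)).card = 3)
    (h : matching3 M) :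
    ∃ R ≤ votes7 M, card R ≤ k ∧ ∃ A : Multiset (Finset (Cand7 k)),
      card A = card R ∧ (∀ v ∈ A, v ∈ votes7 M) ∧
      ∀ c, vetoCount (votes7 M - R + A) none ≤ vetoCount (votes7 M - R + A) c := by
  obtain ⟨M', hM'M, hM'⟩ := (matching3_iff M).1 h
  have hR : replicate k (pVote k) ≤ votes7 M :=
    ((replicate_le_replicate _).2 (Nat.le_add_right k 4)).trans (le_add_left _ _)
  have hfour :
      ∀ c, vetoCount (votes7 M - replicate k (pVote k) + M'.val.map tripleVeto) c = 4 := by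
    intro c
    have := vetoCount_sub_add (M'.val.map tripleVeto) hR c
    rw [vetoCount_replicate_pVote, vetoCount_map_tripleVeto] at this
    rcases mem_pVote_or_eq_elemCand c with hc | ⟨e, rfl⟩
    · rw [vetoCount_votes7_of_mem_pVote M hc, if_pos hc,
        countP_eq_zero.2 fun t _ => notMem_tripleVeto_of_mem_pVote hc t] at this
      omega
    · rw [vetoCount_votes7_elemCand, hM e, if_neg (elemCand_notMem_pVote e),
        Finset.countP_val_eq_card_filter, hM' e] at this
      omega
  refine ⟨replicate k (pVote k), hR, (card_replicate k _).le, M'.val.map tripleVeto, ?_, ?_,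
    fun c => by rw [hfour, hfour]⟩
  · rw [card_map, card_replicate]
    exact card_eq_of_forall_card_filter_elemCand_mem hM' |>.trans (mul_one k)
  · intro v hv
    obtain ⟨t, ht, rfl⟩ := mem_map.1 hv
    exact mem_add.2 (Or.inl (mem_map_of_mem _ (hM'M ht)))

end Bribery

theorem stmt_7_general (k : ℕ) (M : Finset (Fin k × Fin k × Fin k))
    (h1 : ∀ i : Fin k, (M.filter (fun t => t.1 = i)).card = 3)
    (h2 : ∀ i : Fin k, (M.filter (fun t => t.2.1 = i)).card = 3)
    (h3 : ∀ i : Fin k, (M.filter (fun t => t.2.2 = i)).card = 3) :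
    (∃ R ≤ votes7 M, Multiset.card R ≤ k ∧
        ∃ A : Multiset (Finset (Cand7 k)),
          Multiset.card A = Multiset.card R ∧ (∀ v ∈ A, v ∈ votes7 M) ∧
          ∀ c : Cand7 k,
            vetoCount (votes7 M - R + A) none ≤ vetoCount (votes7 M - R + A) c)
      ↔ matching3 M := by
  have hM := (forall_card_filter_elemCand_mem_iff M 3).2 ⟨h1, h2, h3⟩
  constructor
  · rintro ⟨R, hR, hRk, A, hAR, hA, hwin⟩
    exact matching3_of_bribery hM hR hRk hAR hA hwin
  · exact bribery_of_matching3 hM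

/-- In the 3-veto conformant bribery construction from 3DM
(with `k > 0` and every ground element appearing in exactly three triples),
`p = none` can be made a 3-veto winner by changing the votes of at most `k`
voters to votes already occurring in the election iff `M` contains a perfect
matching of size `k`. -/
theorem stmt_7 (k : ℕ) (hk : 0 < k) (M : Finset (Fin k × Fin k × Fin k))
    (h1 : ∀ i : Fin k, (M.filter (fun t => t.1 = i)).card = 3)
    (h2 : ∀ i : Fin k, (M.filter (fun t => t.2.1 = i)).card = 3)
    (h3 : ∀ i : Fin k, (M.filter (fun t => t.2.2 = i)).card = 3) :
    (∃ R ≤ votes7 M, Multiset.card R ≤ k ∧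
        ∃ A : Multiset (Finset (Cand7 k)),
          Multiset.card A = Multiset.card R ∧ (∀ v ∈ A, v ∈ votes7 M) ∧
          ∀ c : Cand7 k,
            vetoCount (votes7 M - R + A) none ≤ vetoCount (votes7 M - R + A) c)
      ↔ matching3 M :=
  stmt_7_general k M h1 h2 h3
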